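/- arXiv:2501.11509 — 4 statements merged into one kernel-verified Lean document; each statement's English description precedes it below -/
import Mathlib

section
/- Let X be an (2n+1)×(2n+1) traceless matrix over C[x] with X^a_0 = 0 for all a, satisfying x^{b-1} X^a_{b-1} - x^b X^a_{b+1} + x^a X^b_{a+1} - x^{a-1} X^b_{a-1} = 0 for all a,b in {0,...,2n}, where out-of-range indices give 0. Then for every a ≥ b, the entry X^a_b lies in the ideal x·C[x]; equivalently, setting x = 0 yields a strictly upper-triangular matrix. -/
open Polynomial

/-- Let `X` be a `(2n+1)×(2n+1)` traceless matrix over `ℂ[x]` (entries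
`Xmat a b`, indices `0,…,2n`, out-of-range entries zero) with first column zero, satisfying
`x^{b-1} X^a_{b-1} - x^b X^a_{b+1} + x^a X^b_{a+1} - x^{a-1} X^b_{a-1} = 0` for all
`a, b ∈ {0,…,2n}` (terms with out-of-range index `-1` or `2n+1` are zero). Then every entry
`X^a_b` with `a ≥ b` lies in the ideal `x·ℂ[x]`; in particular setting `x = 0` yields a
strictly upper-triangular matrix. -/
theorem sp_deformation_constraint (n : ℕ) (hn : 0 < n)
    (Xmat : ℕ → ℕ → Polynomial ℂ)
    (hrange : ∀ a b, (2 * n < a ∨ 2 * n < b) → Xmat a b = 0)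
    (htrace : ∑ a ∈ Finset.range (2 * n + 1), Xmat a a = 0)
    (hcol : ∀ a, Xmat a 0 = 0)
    (hconstraint : ∀ a b, a ≤ 2 * n → b ≤ 2 * n →
      (if b = 0 then 0 else X ^ (b - 1) * Xmat a (b - 1)) - X ^ b * Xmat a (b + 1)
        + X ^ a * Xmat b (a + 1) - (if a = 0 then 0 else X ^ (a - 1) * Xmat b (a - 1)) = 0) :
    ∀ a b, a ≤ 2 * n → b ≤ a →
      (X : Polynomial ℂ) ∣ Xmat a b ∧ (Xmat a b).eval 0 = 0 := by
  have key : ∀ b a, a ≤ 2 * n → b ≤ a → (X : Polynomial ℂ) ^ (a - b) ∣ Xmat a b := by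
    intro b
    induction b using Nat.strong_induction_on with
    | _ b ih =>
      intro a ha hba
      match b, hba with
      | 0, _ => rw [hcol]; exact dvd_zero _
      | 1, hba =>
        have ha0 : a ≠ 0 := by omega
        have h := hconstraint a 0 ha (Nat.zero_le _)
        rw [if_pos rfl, if_neg ha0] at h
        have heq : Xmat a 1 = X ^ a * Xmat 0 (a + 1) - X ^ (a - 1) * Xmat 0 (a - 1) := by
          have h0 : (X : Polynomial ℂ) ^ 0 = 1 := pow_zero _
          linear_combination -h + Xmat a 1 * h0
        rw [heq]
        exact dvd_sub (dvd_mul_of_dvd_left (pow_dvd_pow _ (by omega)) _)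
          (dvd_mul_of_dvd_left dvd_rfl _)
      | (k + 2), hba =>
        have ha0 : a ≠ 0 := by omega
        have h := hconstraint a (k + 1) ha (by omega)
        rw [if_neg (by omega : k + 1 ≠ 0), if_neg ha0] at h
        simp only [Nat.add_sub_cancel] at h
        -- h : X^k * Xmat a k - X^(k+1) * Xmat a (k+2) + X^a * Xmat (k+1) (a+1)
        --       - X^(a-1) * Xmat (k+1) (a-1) = 0
        have hIH : (X : Polynomial ℂ) ^ (a - k) ∣ Xmat a k :=
          ih k (by omega) a ha (by omega)
        obtain ⟨q, hq⟩ := hIH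
        have heq : X ^ (k + 1) * Xmat a (k + 2)
            = X ^ k * (X ^ (a - k) * q) + X ^ a * Xmat (k + 1) (a + 1)
              - X ^ (a - 1) * Xmat (k + 1) (a - 1) := by
          linear_combination -h + X ^ k * hq
        have hpow1 : (X : Polynomial ℂ) ^ k * X ^ (a - k) = X ^ a := by
          rw [← pow_add]; congr 1; omega
        have hdvd : (X : Polynomial ℂ) ^ (a - 1) ∣ X ^ (k + 1) * Xmat a (k + 2) := by
          rw [heq, ← mul_assoc, hpow1]
          exact dvd_sub
            (dvd_add (dvd_mul_of_dvd_left (pow_dvd_pow _ (by omega)) _)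
              (dvd_mul_of_dvd_left (pow_dvd_pow _ (by omega)) _))
            (dvd_mul_of_dvd_left dvd_rfl _)
        have hpow2 : (X : Polynomial ℂ) ^ (a - 1) = X ^ (k + 1) * X ^ (a - (k + 2)) := by
          rw [← pow_add]; congr 1; omega
        rw [hpow2] at hdvd
        exact (mul_dvd_mul_iff_left (pow_ne_zero _ (X_ne_zero (R := ℂ)))).mp hdvd
  -- consecutive diagonal entries
  have diag : ∀ a, a + 1 ≤ 2 * n →
      (Xmat (a + 1) (a + 1)).eval 0 = -(Xmat a a).eval 0 := by
    intro a ha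
    match a with
    | 0 =>
      have h := hconstraint 1 0 (by omega) (by omega)
      rw [if_pos rfl, if_neg (by omega : (1:ℕ) ≠ 0)] at h
      have := congrArg (Polynomial.eval (0 : ℂ)) h
      simp at this
      linear_combination -this
    | (m + 1) =>
      have h := hconstraint (m + 2) (m + 1) (by omega) (by omega)
      rw [if_neg (by omega : m + 1 ≠ 0), if_neg (by omega : m + 2 ≠ 0)] at h
      simp only [Nat.add_sub_cancel, show m + 2 - 1 = m + 1 from rfl] at h
      -- h : X^m * Xmat (m+2) m - X^(m+1) * Xmat (m+2) (m+2) + X^(m+2) * Xmat (m+1) (m+3)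
      --      - X^(m+1) * Xmat (m+1) (m+1) = 0
      obtain ⟨q, hq⟩ : (X : Polynomial ℂ) ^ 2 ∣ Xmat (m + 2) m := by
        have := key m (m + 2) (by omega) (by omega)
        simpa using this
      have heq : X ^ (m + 1) * (Xmat (m + 2) (m + 2) + Xmat (m + 1) (m + 1))
          = X ^ (m + 1) * (X * (q + Xmat (m + 1) (m + 3))) := by
        linear_combination -h + X ^ m * hq
      have hc := mul_left_cancel₀ (pow_ne_zero (m + 1) (X_ne_zero (R := ℂ))) heq
      have := congrArg (Polynomial.eval (0 : ℂ)) hc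
      simp at this
      linear_combination this
  -- diagonal entries alternate at 0
  have dsign : ∀ a, a ≤ 2 * n →
      (Xmat a a).eval 0 = (-1) ^ a * (Xmat 0 0).eval 0 := by
    intro a
    induction a with
    | zero => intro _; simp
    | succ m ihm =>
      intro hm
      rw [diag m hm, ihm (by omega)]
      ring
  -- trace at 0
  have hdiag0 : (Xmat 0 0).eval 0 = 0 := by
    have ht := congrArg (Polynomial.eval (0 : ℂ)) htrace
    rw [Polynomial.eval_finset_sum] at ht
    simp only [Polynomial.eval_zero] at ht
    rw [Finset.sum_congr rfl (fun a haa => dsign a (by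
      have := Finset.mem_range.mp haa; omega))] at ht
    rw [← Finset.sum_mul] at ht
    rw [neg_one_geom_sum, if_neg (by simp [Nat.even_add_one, Nat.even_mul])] at ht
    simpa using ht
  have hdiagall : ∀ a, a ≤ 2 * n → (Xmat a a).eval 0 = 0 := by
    intro a ha; rw [dsign a ha, hdiag0, mul_zero]
  -- assemble
  intro a b ha hba
  have hdvd : (X : Polynomial ℂ) ∣ Xmat a b := by
    rcases eq_or_lt_of_le hba with h | h
    · rw [h, X_dvd_iff, Polynomial.coeff_zero_eq_eval_zero]
      exact hdiagall a ha
    · have := key b a ha hba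
      exact dvd_trans (dvd_pow_self X (by omega : a - b ≠ 0)) this
  refine ⟨hdvd, ?_⟩
  obtain ⟨c, hc⟩ := hdvd
  rw [hc]; simp
end

section
/- The Rogers–Ramanujan identity: Σ_{m=0}^∞ q^{m²}/(q)_m = Π_{j=0}^∞ 1/((1-q^{5j+1})(1-q^{5j+4})) as formal power series in q. Equivalently (the n = k = 1 case of the main identity), (1/(q)_∞) Σ_{u∈Z} (-1)^u q^{(5/2)u² + u/2} = Σ_{m=0}^∞ q^{m²}/(q)_m. -/
open PowerSeries

/-- `(q)_m = ∏_{j=1}^m (1 - q^j)`. -/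
noncomputable def qPoch (m : ℕ) : PowerSeries ℚ :=
  ∏ j ∈ Finset.range m, (1 - (X : PowerSeries ℚ) ^ (j + 1))

/-- `(q)_∞ = ∏_{j=1}^∞ (1 - q^j)`, defined coefficient-wise (the coefficient of `q^N` in
`∏_{j=1}^M (1-q^j)` is independent of `M ≥ N`). -/
noncomputable def eulerProd : PowerSeries ℚ :=
  PowerSeries.mk fun N => PowerSeries.coeff N (qPoch (N + 1))

/-- `Σ_{m=0}^∞ q^{m²}/(q)_m`, defined coefficient-wise: only `m ≤ N` contributes to the
coefficient of `q^N` since the summand is divisible by `q^{m²}`. -/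
noncomputable def rrSum : PowerSeries ℚ :=
  PowerSeries.mk fun N =>
    PowerSeries.coeff N
      (∑ m ∈ Finset.range (N + 1), (X : PowerSeries ℚ) ^ (m ^ 2) * (qPoch m)⁻¹)

/-- `∏_{j=0}^∞ 1/((1-q^{5j+1})(1-q^{5j+4}))`, defined coefficient-wise: factors with
`j > N` do not affect the coefficient of `q^N`. -/
noncomputable def rrProd : PowerSeries ℚ :=
  PowerSeries.mk fun N =>
    PowerSeries.coeff N
      (∏ j ∈ Finset.range (N + 1),
        ((1 - (X : PowerSeries ℚ) ^ (5 * j + 1))⁻¹ * (1 - (X : PowerSeries ℚ) ^ (5 * j + 4))⁻¹))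

/-!
Both sides are compared with Euler's product `(q)_∞` and the theta series
`θ = Σ_{u ∈ ℤ} (-1)^u q^{u(5u+1)/2}`.

Schur's polynomials `D_n = Σ_m q^{m²} [n-m, m]` and
`E_n = Σ_j (-1)^j q^{j(5j+1)/2} [n, ⌊(n-5j)/2⌋]` both satisfy `f (n+2) = f (n+1) + q^{n+1} f n`
with `f 0 = f 1 = 1`, so they agree. Modulo `X^T` and for `n` large, `[n-m, m] ≡ 1/(q)_m` and
`(q)_∞ [n, k] ≡ 1` whenever `k` and `n - k` are large, so `D_n ≡ Σ q^{m²}/(q)_m` and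
`(q)_∞ E_n ≡ θ`: this gives `(q)_∞ · Σ q^{m²}/(q)_m = θ`.

Cauchy's `q`-binomial theorem yields the finite triple product
`∏_{i<n} (1-q^{5i+2})(1-q^{5i+3}) = Σ_j (-1)^j q^{j(5j+1)/2} [2n, n-j]_{q^5}`; multiplying by
`(q^5; q^5)_n` and letting `n → ∞` gives `θ = (q)_∞ · ∏ 1/((1-q^{5j+1})(1-q^{5j+4}))`.
-/

open Finset

section GaussBinom

variable {R : Type*} [CommRing R] (Q : R)

def qPochhammer (m : ℕ) : R := ∏ j ∈ range m, (1 - Q ^ (j + 1))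

lemma qPochhammer_succ (m : ℕ) : qPochhammer Q (m + 1) = qPochhammer Q m * (1 - Q ^ (m + 1)) :=
  prod_range_succ _ _

def gaussBinom : ℕ → ℕ → R
  | _, 0 => 1
  | 0, _ + 1 => 0
  | n + 1, k + 1 => gaussBinom n (k + 1) + Q ^ (n - k) * gaussBinom n k

@[simp] lemma gaussBinom_zero_right (n : ℕ) : gaussBinom Q n 0 = 1 := by cases n <;> rfl

lemma gaussBinom_succ_succ (n k : ℕ) :
    gaussBinom Q (n + 1) (k + 1) = gaussBinom Q n (k + 1) + Q ^ (n - k) * gaussBinom Q n k := rfl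

lemma gaussBinom_eq_zero_of_lt : ∀ {n k : ℕ}, n < k → gaussBinom Q n k = 0
  | 0, _ + 1, _ => rfl
  | n + 1, k + 1, h => by
    rw [gaussBinom_succ_succ, gaussBinom_eq_zero_of_lt (by omega),
      gaussBinom_eq_zero_of_lt (n := n) (by omega), mul_zero, add_zero]

@[simp] lemma gaussBinom_self : ∀ n : ℕ, gaussBinom Q n n = 1
  | 0 => rfl
  | n + 1 => by
    rw [gaussBinom_succ_succ, gaussBinom_eq_zero_of_lt Q (Nat.lt_succ_self n), gaussBinom_self n]
    simp

/-- Exponents only matter where `[n, k]` does not vanish, so truncated subtraction is harmless. -/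
lemma pow_mul_gaussBinom_congr {a b n k : ℕ} (h : k ≤ n → a = b) :
    Q ^ a * gaussBinom Q n k = Q ^ b * gaussBinom Q n k := by
  rcases le_or_gt k n with hk | hk
  · rw [h hk]
  · simp [gaussBinom_eq_zero_of_lt Q hk]

lemma gaussBinom_succ_succ' : ∀ n k : ℕ,
    gaussBinom Q (n + 1) (k + 1) = Q ^ (k + 1) * gaussBinom Q n (k + 1) + gaussBinom Q n k
  | 0, 0 => by simp [gaussBinom_eq_zero_of_lt]
  | 0, k + 1 => by simp [gaussBinom_eq_zero_of_lt]
  | n + 1, 0 => by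
    have ih := gaussBinom_succ_succ' n 0
    have e₁ := gaussBinom_succ_succ Q (n + 1) 0
    have e₂ := gaussBinom_succ_succ Q n 0
    simp only [gaussBinom_zero_right, Nat.sub_zero, pow_succ] at ih e₁ e₂ ⊢
    linear_combination e₁ + ih - Q * e₂
  | n + 1, k + 1 => by
    have ih₁ := gaussBinom_succ_succ' n (k + 1)
    have ih₀ := gaussBinom_succ_succ' n k
    have e₁ := gaussBinom_succ_succ Q (n + 1) (k + 1)
    have e₂ := gaussBinom_succ_succ Q n (k + 1)
    have e₃ := gaussBinom_succ_succ Q n k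
    have hexp := pow_mul_gaussBinom_congr Q (a := n - k + (k + 1)) (b := k + 2 + (n - (k + 1)))
      (n := n) (k := k + 1) (by omega)
    rw [Nat.add_sub_add_right] at e₁
    rw [pow_add, pow_add] at hexp
    linear_combination e₁ + ih₁ + Q ^ (n - k) * ih₀ - Q ^ (k + 2) * e₂ - e₃ + hexp

lemma gaussBinom_mul_qPochhammer_mul_qPochhammer : ∀ {a m : ℕ}, m ≤ a →
    gaussBinom Q a m * qPochhammer Q m * qPochhammer Q (a - m) = qPochhammer Q a
  | a, 0, _ => by simp [qPochhammer]
  | 0, _ + 1, h => by omega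
  | a + 1, m + 1, h => by
    rcases (Nat.le_of_lt_succ h).eq_or_lt with rfl | hm
    · simp [qPochhammer]
    obtain ⟨d, rfl⟩ : ∃ d, a = m + 1 + d := ⟨a - (m + 1), by omega⟩
    have ih₁ := gaussBinom_mul_qPochhammer_mul_qPochhammer (a := m + 1 + d) (m := m + 1) (by omega)
    have ih₀ := gaussBinom_mul_qPochhammer_mul_qPochhammer (a := m + 1 + d) (m := m) (by omega)
    rw [show m + 1 + d - (m + 1) = d by omega, qPochhammer_succ Q m] at ih₁
    rw [show m + 1 + d - m = d + 1 by omega, qPochhammer_succ Q d] at ih₀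
    rw [gaussBinom_succ_succ, show m + 1 + d - m = d + 1 by omega,
      show m + 1 + d + 1 - (m + 1) = d + 1 by omega, qPochhammer_succ Q d, qPochhammer_succ Q m,
      qPochhammer_succ Q (m + 1 + d), show m + 1 + d + 1 = (d + 1) + (m + 1) by omega, pow_add]
    linear_combination (1 - Q ^ (d + 1)) * ih₁ + Q ^ (d + 1) * (1 - Q ^ (m + 1)) * ih₀

/-- Cauchy's `q`-binomial theorem. -/
theorem prod_add_mul_pow_eq_sum_gaussBinom (y z : R) (m : ℕ) :
    ∏ i ∈ range m, (y + z * Q ^ i) =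
      ∑ k ∈ range (m + 1), gaussBinom Q m k * Q ^ k.choose 2 * z ^ k * y ^ (m - k) := by
  induction m with
  | zero => simp
  | succ m ih =>
    set g : ℕ → R := fun k =>
      gaussBinom Q m (k + 1) * Q ^ (k + 1).choose 2 * z ^ (k + 1) * y ^ (m - k)
    have hy : (∑ k ∈ range (m + 1), gaussBinom Q m k * Q ^ k.choose 2 * z ^ k * y ^ (m - k)) * y =
        ∑ k ∈ range (m + 1), g k + y ^ (m + 1) := by
      rw [sum_mul, sum_range_succ', sum_range_succ g m]
      simp only [g, gaussBinom_eq_zero_of_lt Q (Nat.lt_succ_self m), gaussBinom_zero_right,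
        Nat.choose_zero_succ, pow_zero, Nat.sub_zero]
      rw [sum_congr rfl fun k hk => ?_]
      · ring
      · rw [show m - k = m - (k + 1) + 1 by have := mem_range.1 hk; omega, pow_succ]
        ring
    have hsplit : ∀ k ∈ range (m + 1),
        gaussBinom Q (m + 1) (k + 1) * Q ^ (k + 1).choose 2 * z ^ (k + 1) * y ^ (m + 1 - (k + 1)) =
          g k + gaussBinom Q m k * Q ^ k.choose 2 * z ^ k * y ^ (m - k) * (z * Q ^ m) := by
      intro k _
      have hc : (k + 1).choose 2 = k.choose 2 + k := by
        rw [Nat.choose_succ_succ', Nat.choose_one_right, add_comm]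
      have hexp := pow_mul_gaussBinom_congr Q (a := m - k + (k + 1).choose 2) (b := k.choose 2 + m)
        (n := m) (k := k) (by omega)
      rw [pow_add, pow_add] at hexp
      simp only [g, gaussBinom_succ_succ, Nat.add_sub_add_right]
      linear_combination z ^ (k + 1) * y ^ (m - k) * hexp
    rw [prod_range_succ, ih, sum_range_succ' _ (m + 1), sum_congr rfl hsplit, sum_add_distrib,
      ← sum_mul, mul_add, hy]
    simp only [gaussBinom_zero_right, Nat.choose_zero_succ, pow_zero, one_mul, mul_one,
      Nat.sub_zero]
    ring

def gaussBinomInt (n : ℕ) (k : ℤ) : R := if 0 ≤ k then gaussBinom Q n k.toNat else 0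

@[simp] lemma gaussBinomInt_natCast (n k : ℕ) : gaussBinomInt Q n k = gaussBinom Q n k := by
  simp [gaussBinomInt]

@[simp] lemma gaussBinomInt_zero_right (n : ℕ) : gaussBinomInt Q n 0 = 1 := by
  simp [gaussBinomInt]

lemma gaussBinomInt_of_neg {n : ℕ} {k : ℤ} (hk : k < 0) : gaussBinomInt Q n k = 0 := by
  simp [gaussBinomInt, not_le.2 hk]

lemma gaussBinomInt_of_lt {n : ℕ} {k : ℤ} (hk : (n : ℤ) < k) : gaussBinomInt Q n k = 0 := by
  rw [gaussBinomInt, if_pos (by omega), gaussBinom_eq_zero_of_lt Q (by omega)]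

lemma pow_mul_gaussBinomInt_congr {a b n : ℕ} {k : ℤ} (h : 0 ≤ k → k ≤ n → a = b) :
    Q ^ a * gaussBinomInt Q n k = Q ^ b * gaussBinomInt Q n k := by
  rcases lt_or_ge k 0 with hk | hk
  · simp [gaussBinomInt_of_neg Q hk]
  · lift k to ℕ using hk
    simp only [gaussBinomInt_natCast]
    exact pow_mul_gaussBinom_congr Q fun hkn => h (Int.natCast_nonneg k) (by omega)

lemma gaussBinom_add_two_left (n b : ℕ) :
    gaussBinom Q (n + 2) b = gaussBinomInt Q (n + 1) ((b : ℤ) - 1) +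
      Q ^ (n + 1) * gaussBinomInt Q n ((b : ℤ) - 1) + Q ^ b * gaussBinom Q n b := by
  rcases b with _ | b
  · simp [gaussBinomInt_of_neg]
  have e₁ := gaussBinom_succ_succ' Q (n + 1) b
  have e₂ := gaussBinom_succ_succ Q n b
  have hexp := pow_mul_gaussBinom_congr Q (a := b + 1 + (n - b)) (b := n + 1) (n := n) (k := b)
    (by omega)
  rw [pow_add] at hexp
  push_cast
  simp only [add_sub_cancel_right, gaussBinomInt_natCast]
  linear_combination e₁ + Q ^ (b + 1) * e₂ + hexp

lemma gaussBinom_add_two_left' (n b : ℕ) :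
    gaussBinom Q (n + 2) b = gaussBinom Q (n + 1) b +
      Q ^ (n + 1) * gaussBinomInt Q n ((b : ℤ) - 1) +
        Q ^ (n + 2 - b) * gaussBinomInt Q n ((b : ℤ) - 2) := by
  rcases b with _ | _ | b
  · simp [gaussBinomInt_of_neg]
  · simp [gaussBinomInt_of_neg, gaussBinom_succ_succ]
  have e₁ := gaussBinom_succ_succ Q (n + 1) (b + 1)
  have e₂ := gaussBinom_succ_succ' Q n b
  have hexp := pow_mul_gaussBinom_congr Q (a := n - b + (b + 1)) (b := n + 1) (n := n)
    (k := b + 1) (by omega)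
  rw [Nat.add_sub_add_right] at e₁
  rw [pow_add] at hexp
  rw [show ((b + 2 : ℕ) : ℤ) - 1 = (b + 1 : ℕ) by push_cast; ring,
    show ((b + 2 : ℕ) : ℤ) - 2 = b by push_cast; ring, gaussBinomInt_natCast,
    gaussBinomInt_natCast, show n + 2 - (b + 2) = n - b by omega]
  linear_combination e₁ + Q ^ (n - b) * e₂ + hexp

end GaussBinom

def rrExp (j : ℤ) : ℕ := (j * (5 * j + 1) / 2).toNat

lemma two_mul_rrExp (j : ℤ) : 2 * (rrExp j : ℤ) = j * (5 * j + 1) := by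
  have hnonneg : 0 ≤ j * (5 * j + 1) := by
    rcases le_or_gt 0 j with hj | hj <;> nlinarith
  obtain ⟨r, hr⟩ := Int.even_mul_succ_self j
  have heven : j * (5 * j + 1) = 2 * (r + 2 * j * j) := by linear_combination hr
  rw [rrExp]
  omega

lemma rrExp_add_one (j : ℤ) : (rrExp (j + 1) : ℤ) = rrExp j + 5 * j + 3 := by
  have h₁ := two_mul_rrExp (j + 1)
  have h₀ := two_mul_rrExp j
  linarith

lemma natAbs_le_rrExp (j : ℤ) : j.natAbs ≤ rrExp j := by
  have h := two_mul_rrExp j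
  zify
  rcases lt_trichotomy j 0 with hj | rfl | hj
  · rw [abs_of_neg hj]; nlinarith
  · simp
  · rw [abs_of_pos hj]; nlinarith

lemma sum_range_eq_sum_Icc_neg {M : Type*} [AddCommMonoid M] (f : ℤ → M) (n : ℕ) :
    ∑ k ∈ range (2 * n + 1), f (n - k) = ∑ j ∈ Icc (-(n : ℤ)) n, f j := by
  refine sum_nbij' (fun k => (n : ℤ) - k) (fun j => ((n : ℤ) - j).toNat) ?_ ?_ ?_ ?_
    fun _ _ => rfl
  all_goals
    intro x hx
    simp only [mem_range, mem_Icc] at hx ⊢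
    omega

lemma sum_Icc_neg_sub_succ {M : Type*} [AddCommGroup M] (f : ℤ → M) (n : ℕ) :
    ∑ j ∈ Icc (-(n : ℤ)) n, (f j - f (j + 1)) = f (-n) - f (n + 1) := by
  set g : ℕ → M := fun k => f (n + 1 - k)
  calc ∑ j ∈ Icc (-(n : ℤ)) n, (f j - f (j + 1))
      = ∑ k ∈ range (2 * n + 1), (g (k + 1) - g k) := by
        rw [← sum_range_eq_sum_Icc_neg]
        refine sum_congr rfl fun k _ => ?_
        simp only [g]
        congr 2 <;> push_cast <;> ring
    _ = f (-n) - f (n + 1) := by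
        rw [sum_range_sub]
        simp only [g]
        congr 2
        push_cast
        ring

section Schur

variable {R : Type*} [CommRing R] (q : R)

noncomputable def rrSumPoly (n : ℕ) : R := ∑ m ∈ range (n + 1), q ^ (m ^ 2) * gaussBinom q (n - m) m

/-- Integer division rounds down, so the last factor is `[n, ⌊(n - 5j)/2⌋]_q`. -/
noncomputable def rrThetaTerm (n : ℕ) (j : ℤ) : R :=
  (j.negOnePow : R) * q ^ rrExp j * gaussBinomInt q n ((n - 5 * j) / 2)

noncomputable def rrThetaPoly (n : ℕ) : R := ∑ j ∈ Icc (-(n : ℤ)) n, rrThetaTerm q n j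

/-- The correction terms that make the recursion for `rrThetaPoly` telescope. -/
noncomputable def rrThetaCorr (n : ℕ) (j : ℤ) : R :=
  if Even ((n : ℤ) - 5 * j) then
    (j.negOnePow : R) * q ^ (rrExp j + (((n : ℤ) + 2 - 5 * j) / 2).toNat) *
      gaussBinomInt q n ((n + 2 - 5 * j) / 2)
  else 0

lemma rrThetaTerm_add_two (n : ℕ) (j : ℤ) :
    rrThetaTerm q (n + 2) j = rrThetaTerm q (n + 1) j + q ^ (n + 1) * rrThetaTerm q n j +
      (rrThetaCorr q n j - rrThetaCorr q n (j + 1)) := by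
  have hsign : ((j + 1).negOnePow : R) = -(j.negOnePow : R) := by simp [Int.negOnePow_succ]
  have hexp := rrExp_add_one j
  simp only [rrThetaTerm, rrThetaCorr, hsign]
  push_cast
  rcases lt_or_ge ((n : ℤ) + 2 - 5 * j) 0 with hv | hv
  · simp only [gaussBinomInt_of_neg q (show ((n : ℤ) + 2 - 5 * j) / 2 < 0 by omega),
      gaussBinomInt_of_neg q (show ((n : ℤ) + 1 - 5 * j) / 2 < 0 by omega),
      gaussBinomInt_of_neg q (show ((n : ℤ) - 5 * j) / 2 < 0 by omega),
      gaussBinomInt_of_neg q (show ((n : ℤ) + 2 - 5 * (j + 1)) / 2 < 0 by omega)]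
    simp
  -- The parity of `n - 5j` decides which expansion of `[n + 2, b]` applies.
  obtain ⟨b, hb | hb⟩ : ∃ b : ℕ,
      (n : ℤ) + 2 - 5 * j = 2 * b ∨ (n : ℤ) + 2 - 5 * j = 2 * b + 1 :=
    ⟨((n : ℤ) + 2 - 5 * j).toNat / 2, by omega⟩
  · have h := gaussBinom_add_two_left q n b
    rw [if_pos (Int.even_iff.2 (by omega)), if_neg (Int.not_even_iff.2 (by omega)),
      show ((n : ℤ) + 2 - 5 * j) / 2 = b by omega, show ((n : ℤ) + 1 - 5 * j) / 2 = b - 1 by omega,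
      show ((n : ℤ) - 5 * j) / 2 = b - 1 by omega, Int.toNat_natCast, gaussBinomInt_natCast,
      gaussBinomInt_natCast, pow_add]
    linear_combination (j.negOnePow : R) * q ^ rrExp j * h
  · have h := gaussBinom_add_two_left' q n b
    have hcongr := pow_mul_gaussBinomInt_congr q (a := rrExp j + (n + 2 - b))
      (b := rrExp (j + 1) + ((b : ℤ) - 2).toNat) (n := n) (k := (b : ℤ) - 2) (by omega)
    rw [if_neg (Int.not_even_iff.2 (by omega)), if_pos (Int.even_iff.2 (by omega)),
      show ((n : ℤ) + 2 - 5 * j) / 2 = b by omega, show ((n : ℤ) + 1 - 5 * j) / 2 = b by omega,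
      show ((n : ℤ) - 5 * j) / 2 = b - 1 by omega,
      show ((n : ℤ) + 2 - 5 * (j + 1)) / 2 = b - 2 by omega, gaussBinomInt_natCast,
      gaussBinomInt_natCast]
    rw [pow_add] at hcongr
    linear_combination (j.negOnePow : R) * q ^ rrExp j * h + (j.negOnePow : R) * hcongr

lemma rrThetaTerm_eq_zero {n : ℕ} {j : ℤ} (h : (n : ℤ) < |j|) : rrThetaTerm q n j = 0 := by
  rw [rrThetaTerm]
  rcases lt_abs.1 h with h | h
  · rw [gaussBinomInt_of_neg q (by omega), mul_zero]
  · rw [gaussBinomInt_of_lt q (by omega), mul_zero]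

lemma rrThetaCorr_eq_zero {n : ℕ} {j : ℤ} (h : (n : ℤ) + 1 < |j|) : rrThetaCorr q n j = 0 := by
  rw [rrThetaCorr]
  split_ifs
  · rcases lt_abs.1 h with h | h
    · rw [gaussBinomInt_of_neg q (by omega), mul_zero]
    · rw [gaussBinomInt_of_lt q (by omega), mul_zero]
  · rfl

lemma rrThetaPoly_eq_sum {n M : ℕ} (h : n ≤ M) :
    rrThetaPoly q n = ∑ j ∈ Icc (-(M : ℤ)) M, rrThetaTerm q n j := by
  refine sum_subset (Icc_subset_Icc (by omega) (by omega)) fun j hjM hjn => ?_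
  rw [mem_Icc] at hjM hjn
  exact rrThetaTerm_eq_zero q (lt_abs.2 (by omega))

lemma rrThetaPoly_add_two (n : ℕ) :
    rrThetaPoly q (n + 2) = rrThetaPoly q (n + 1) + q ^ (n + 1) * rrThetaPoly q n := by
  rw [rrThetaPoly, sum_congr rfl fun j _ => rrThetaTerm_add_two q n j, sum_add_distrib,
    sum_Icc_neg_sub_succ, rrThetaCorr_eq_zero q (by rw [abs_neg, Nat.abs_cast]; omega),
    rrThetaCorr_eq_zero q (by rw [abs_of_nonneg (by positivity)]; omega), sub_zero,
    add_zero, sum_add_distrib, ← mul_sum, rrThetaPoly_eq_sum q (Nat.le_succ _),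
    rrThetaPoly_eq_sum q (Nat.le_add_right n 2)]

lemma rrSumPoly_eq_sum {n M : ℕ} (h : n < M) :
    rrSumPoly q n = ∑ m ∈ range M, q ^ (m ^ 2) * gaussBinom q (n - m) m := by
  refine sum_subset (range_subset_range.2 h) fun m hmM hmn => ?_
  rw [mem_range] at hmM hmn
  rw [gaussBinom_eq_zero_of_lt q (by omega), mul_zero]

lemma rrSumPoly_add_two (n : ℕ) :
    rrSumPoly q (n + 2) = rrSumPoly q (n + 1) + q ^ (n + 1) * rrSumPoly q n := by
  have hterm : ∀ m ∈ range (n + 2),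
      q ^ ((m + 1) ^ 2) * gaussBinom q (n + 2 - (m + 1)) (m + 1) =
        q ^ ((m + 1) ^ 2) * gaussBinom q (n + 1 - (m + 1)) (m + 1) +
          q ^ (n + 1) * (q ^ (m ^ 2) * gaussBinom q (n - m) m) := by
    intro m hm
    rw [mem_range] at hm
    rcases (Nat.le_of_lt_succ hm).eq_or_lt with rfl | hm
    · simp [gaussBinom_eq_zero_of_lt]
    have hexp := pow_mul_gaussBinom_congr q (a := (m + 1) ^ 2 + (n - m - m)) (b := n + 1 + m ^ 2)
      (n := n - m) (k := m) (fun _ => by ring_nf; omega)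
    rw [show n + 2 - (m + 1) = n - m + 1 by omega, show n + 1 - (m + 1) = n - m by omega,
      gaussBinom_succ_succ]
    rw [pow_add, pow_add] at hexp
    linear_combination hexp
  have h₂ : rrSumPoly q (n + 2) =
      ∑ m ∈ range (n + 2), q ^ ((m + 1) ^ 2) * gaussBinom q (n + 2 - (m + 1)) (m + 1) +
        q ^ (0 ^ 2) * gaussBinom q (n + 2 - 0) 0 :=
    sum_range_succ' _ _
  have h₁ : rrSumPoly q (n + 1) =
      ∑ m ∈ range (n + 2), q ^ ((m + 1) ^ 2) * gaussBinom q (n + 1 - (m + 1)) (m + 1) +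
        q ^ (0 ^ 2) * gaussBinom q (n + 1 - 0) 0 := by
    rw [rrSumPoly_eq_sum q (show n + 1 < n + 3 by omega), sum_range_succ']
  rw [h₂, h₁, rrSumPoly_eq_sum q (show n < n + 2 by omega), sum_congr rfl hterm, sum_add_distrib,
    mul_sum, gaussBinom_zero_right, gaussBinom_zero_right]
  ring

/-- Schur's polynomial identity, the finite form of the Rogers–Ramanujan identity. -/
theorem rrSumPoly_eq_rrThetaPoly (n : ℕ) : rrSumPoly q n = rrThetaPoly q n := by
  induction n using Nat.twoStepInduction with
  | zero => simp [rrSumPoly, rrThetaPoly, rrThetaTerm, rrExp]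
  | one =>
    rw [rrThetaPoly, show Icc (-((1 : ℕ) : ℤ)) (1 : ℕ) = {-1, 0, 1} by decide]
    simp [rrSumPoly, rrThetaTerm, rrExp, sum_range_succ, gaussBinom_eq_zero_of_lt,
      gaussBinomInt_of_lt, gaussBinomInt_of_neg]
  | more n ih₀ ih₁ => rw [rrSumPoly_add_two, rrThetaPoly_add_two, ih₀, ih₁]

end Schur

section JacobiTripleProduct

variable {R : Type*} [CommRing R] (q : R)

lemma five_mul_choose_two_add_eq_add_rrExp {n k : ℕ} (hk : k ≤ 2 * n) :
    5 * k.choose 2 + 2 * k + 5 * (n * (2 * n - k)) =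
      5 * n.choose 2 + 2 * n + 5 * n ^ 2 + rrExp (n - k) := by
  have hq : 2 * (rrExp ((n : ℤ) - k) : ℚ) = ((n : ℚ) - k) * (5 * ((n : ℚ) - k) + 1) := by
    exact_mod_cast two_mul_rrExp ((n : ℤ) - k)
  qify [hk]
  rw [Nat.cast_choose_two, Nat.cast_choose_two]
  linear_combination (-1 / 2 : ℚ) * hq

lemma prod_range_two_mul_pow_add_neg_mul_pow (n : ℕ) :
    ∏ i ∈ range (2 * n), (q ^ (5 * n) + -q ^ 2 * (q ^ 5) ^ i) =
      (-1) ^ n * q ^ (5 * n.choose 2 + 2 * n + 5 * n ^ 2) *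
        ∏ i ∈ range n, ((1 - q ^ (5 * i + 2)) * (1 - q ^ (5 * i + 3))) := by
  have hlow : ∀ i ∈ range n, q ^ (5 * n) + -q ^ 2 * (q ^ 5) ^ i =
      -q ^ (5 * i + 2) * (1 - q ^ (5 * (n - 1 - i) + 3)) := fun i hi => by
    have : 5 * i + 2 + (5 * (n - 1 - i) + 3) = 5 * n := by have := mem_range.1 hi; omega
    rw [← pow_mul, ← this]
    ring
  have hhigh : ∀ i ∈ range n, q ^ (5 * n) + -q ^ 2 * (q ^ 5) ^ (n + i) =
      q ^ (5 * n) * (1 - q ^ (5 * i + 2)) := fun i _ => by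
    rw [← pow_mul, mul_add, pow_add, pow_add]
    ring
  have hsum : ∑ i ∈ range n, (5 * i + 2) = 5 * n.choose 2 + 2 * n := by
    rw [sum_add_distrib, ← mul_sum, sum_range_id, ← Nat.choose_two_right]
    simp [mul_comm]
  rw [two_mul, prod_range_add, prod_congr rfl hlow, prod_congr rfl hhigh, prod_mul_distrib,
    prod_mul_distrib, prod_mul_distrib, prod_neg, prod_pow_eq_pow_sum, hsum,
    prod_range_reflect (fun i => 1 - q ^ (5 * i + 3)), prod_const, card_range, ← pow_mul]
  ring

/-- A finite form of Jacobi's triple product identity. -/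
theorem prod_one_sub_mul_one_sub_eq_sum [IsDomain R] (hq : q ≠ 0) (n : ℕ) :
    ∏ i ∈ range n, ((1 - q ^ (5 * i + 2)) * (1 - q ^ (5 * i + 3))) =
      ∑ j ∈ Icc (-(n : ℤ)) n,
        (j.negOnePow : R) * q ^ rrExp j * gaussBinomInt (q ^ 5) (2 * n) (n - j) := by
  set E := 5 * n.choose 2 + 2 * n + 5 * n ^ 2
  have hsq : (-1 : R) ^ n * (-1) ^ n = 1 := by rw [← mul_pow, neg_one_mul, neg_neg, one_pow]
  refine mul_left_cancel₀ (mul_ne_zero (pow_ne_zero n (neg_ne_zero.2 one_ne_zero))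
    (pow_ne_zero E hq)) ?_
  rw [← prod_range_two_mul_pow_add_neg_mul_pow, prod_add_mul_pow_eq_sum_gaussBinom,
    ← sum_range_eq_sum_Icc_neg, mul_sum]
  refine sum_congr rfl fun k hk => ?_
  have hpow : (q ^ 5) ^ k.choose 2 * (q ^ 2) ^ k * (q ^ (5 * n)) ^ (2 * n - k) =
      q ^ E * q ^ rrExp (n - k) := by
    simp only [← pow_mul, ← pow_add]
    rw [← five_mul_choose_two_add_eq_add_rrExp (Nat.lt_succ_iff.1 (mem_range.1 hk))]
    ring_nf
  have hsign : (((n : ℤ) - k).negOnePow : R) = (-1) ^ n * (-1) ^ k := by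
    rw [Int.negOnePow_sub, Units.val_mul, Int.cast_mul, Int.cast_negOnePow_natCast,
      Int.cast_negOnePow_natCast]
  rw [hsign, show (n : ℤ) - ((n : ℤ) - k) = k by ring, gaussBinomInt_natCast, neg_pow]
  linear_combination gaussBinom (q ^ 5) (2 * n) k * (-1) ^ k * hpow -
    gaussBinom (q ^ 5) (2 * n) k * (-1) ^ k * q ^ E * q ^ rrExp (n - k) * hsq

end JacobiTripleProduct

lemma qPochhammer_X_five_mul_mul_prod_inv {K : Type*} [Field K] (n : ℕ) :
    qPochhammer (X : K⟦X⟧) (5 * n) *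
        ∏ i ∈ range n, ((1 - X ^ (5 * i + 1))⁻¹ * (1 - X ^ (5 * i + 4))⁻¹) =
      (∏ i ∈ range n, ((1 - X ^ (5 * i + 2)) * (1 - X ^ (5 * i + 3)))) *
        qPochhammer (X ^ 5) n := by
  induction n with
  | zero => simp [qPochhammer]
  | succ n ih =>
    have h₁ : (1 - (X : K⟦X⟧) ^ (5 * n + 1)) * (1 - X ^ (5 * n + 1))⁻¹ = 1 :=
      PowerSeries.mul_inv_cancel _ (by simp)
    have h₄ : (1 - (X : K⟦X⟧) ^ (5 * n + 4)) * (1 - X ^ (5 * n + 4))⁻¹ = 1 :=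
      PowerSeries.mul_inv_cancel _ (by simp)
    rw [show 5 * (n + 1) = 5 * n + 4 + 1 by ring, qPochhammer_succ, qPochhammer_succ,
      qPochhammer_succ, qPochhammer_succ, qPochhammer_succ, prod_range_succ, prod_range_succ,
      qPochhammer_succ, ← pow_mul]
    simp only [add_assoc, Nat.reduceAdd, mul_add, mul_one]
    linear_combination (1 - X ^ (5 * n + 2)) * (1 - X ^ (5 * n + 3)) * (1 - X ^ (5 * n + 5)) *
      (qPochhammer (X : K⟦X⟧) (5 * n) *
        (∏ i ∈ range n, ((1 - X ^ (5 * i + 1))⁻¹ * (1 - X ^ (5 * i + 4))⁻¹)) *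
        ((1 - X ^ (5 * n + 4)) * (1 - X ^ (5 * n + 4))⁻¹ * h₁ + h₄) + ih)

section Congruence

lemma SModEq.of_mul_right_isUnit {S : Type*} [CommRing S] {I : Ideal S} {a b u : S}
    (hu : IsUnit u) (h : a * u ≡ b * u [SMOD I]) : a ≡ b [SMOD I] := by
  obtain ⟨v, hv⟩ := hu.exists_right_inv
  simpa [mul_assoc, hv] using h.mul (SModEq.refl v)

lemma prod_range_smodEq_of_tail {S : Type*} [CommRing S] {I : Ideal S} {f : ℕ → S} {N a b : ℕ}
    (hf : ∀ i, N ≤ i → f i ≡ 1 [SMOD I]) (ha : N ≤ a) (hb : N ≤ b) :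
    ∏ i ∈ range a, f i ≡ ∏ i ∈ range b, f i [SMOD I] := by
  wlog hab : a ≤ b generalizing a b
  · exact (this hb ha (by omega)).symm
  rw [← prod_range_mul_prod_Ico f hab]
  have htail : ∏ i ∈ Ico a b, f i ≡ ∏ i ∈ Ico a b, 1 [SMOD I] :=
    SModEq.prod fun i hi => hf i (ha.trans (mem_Ico.1 hi).1)
  simpa using (SModEq.refl (∏ i ∈ range a, f i)).mul htail.symm

lemma sum_range_smodEq_of_tail {S : Type*} [CommRing S] {I : Ideal S} {f : ℕ → S} {N a b : ℕ}
    (hf : ∀ i, N ≤ i → f i ≡ 0 [SMOD I]) (ha : N ≤ a) (hb : N ≤ b) :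
    ∑ i ∈ range a, f i ≡ ∑ i ∈ range b, f i [SMOD I] := by
  wlog hab : a ≤ b generalizing a b
  · exact (this hb ha (by omega)).symm
  rw [← sum_range_add_sum_Ico f hab]
  have htail : ∑ i ∈ Ico a b, f i ≡ ∑ i ∈ Ico a b, 0 [SMOD I] :=
    SModEq.sum fun i hi => hf i (ha.trans (mem_Ico.1 hi).1)
  simpa using (SModEq.refl (∑ i ∈ range a, f i)).add htail.symm

variable {R : Type*} [CommRing R] {T : ℕ}

local notation:50 A " ≡ " B " [X^" T "]" => SModEq (Ideal.span {X ^ T}) A B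

lemma smodEq_X_pow_iff {A B : R⟦X⟧} : A ≡ B [X^T] ↔ ∀ m < T, coeff m A = coeff m B := by
  simp [SModEq.sub_mem, Ideal.mem_span_singleton, X_pow_dvd_iff, sub_eq_zero]

lemma eq_of_forall_smodEq_X_pow {A B : R⟦X⟧} (h : ∀ T, A ≡ B [X^T]) : A = B :=
  ext fun N => smodEq_X_pow_iff.1 (h (N + 1)) N (Nat.lt_succ_self N)

lemma smodEq_zero_of_X_pow_dvd {A : R⟦X⟧} (h : X ^ T ∣ A) : A ≡ 0 [X^T] :=
  SModEq.zero.2 (Ideal.mem_span_singleton.2 h)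

lemma X_pow_mul_smodEq_zero {e : ℕ} (h : T ≤ e) (A : R⟦X⟧) : X ^ e * A ≡ 0 [X^T] :=
  smodEq_zero_of_X_pow_dvd (dvd_mul_of_dvd_left (pow_dvd_pow X h) A)

lemma smodEq_of_coeff_eq_of_stable {A : R⟦X⟧} {F : ℕ → R⟦X⟧}
    (hF : ∀ t a b, t ≤ a → t ≤ b → F a ≡ F b [X^t]) (hA : ∀ N, coeff N A = coeff N (F (N + 1)))
    {M : ℕ} (h : T ≤ M) : A ≡ F M [X^T] :=
  smodEq_X_pow_iff.2 fun m hm => by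
    rw [hA]
    exact smodEq_X_pow_iff.1 (hF (m + 1) _ _ le_rfl (by omega)) m (Nat.lt_succ_self m)

lemma isUnit_qPochhammer {Q : R⟦X⟧} (hQ : X ∣ Q) (m : ℕ) : IsUnit (qPochhammer Q m) := by
  simp [qPochhammer, isUnit_iff_constantCoeff, X_dvd_iff.1 hQ]

lemma qPochhammer_smodEq {Q : R⟦X⟧} (hQ : X ∣ Q) {a b : ℕ} (ha : T ≤ a) (hb : T ≤ b) :
    qPochhammer Q a ≡ qPochhammer Q b [X^T] := by
  refine prod_range_smodEq_of_tail (fun i hi => ?_) ha hb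
  have hdvd : X ^ T ∣ Q ^ (i + 1) := (pow_dvd_pow X (by omega)).trans (pow_dvd_pow_of_dvd hQ _)
  simpa using SModEq.rfl.sub (smodEq_zero_of_X_pow_dvd hdvd)

lemma gaussBinom_mul_qPochhammer_smodEq_one {Q : R⟦X⟧} (hQ : X ∣ Q) {a b : ℕ} (hb : b ≤ a)
    (h : T ≤ a - b) : gaussBinom Q a b * qPochhammer Q b ≡ 1 [X^T] := by
  refine SModEq.of_mul_right_isUnit (isUnit_qPochhammer hQ (a - b)) ?_
  rw [gaussBinom_mul_qPochhammer_mul_qPochhammer Q hb, one_mul]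
  exact qPochhammer_smodEq hQ (by omega) h

lemma qPochhammer_mul_gaussBinomInt_smodEq_one {Q : R⟦X⟧} (hQ : X ∣ Q) {M a : ℕ} {b : ℤ}
    (hM : T ≤ M) (hb : T ≤ b) (hab : T ≤ a - b) :
    qPochhammer Q M * gaussBinomInt Q a b ≡ 1 [X^T] := by
  lift b to ℕ using by omega
  rw [gaussBinomInt_natCast, mul_comm]
  exact (SModEq.rfl.mul (qPochhammer_smodEq hQ hM (by omega))).trans
    (gaussBinom_mul_qPochhammer_smodEq_one hQ (by omega) (by omega))

lemma inv_one_sub_X_pow_smodEq_one {K : Type*} [Field K] {k : ℕ} (h : T ≤ k + 1) :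
    (1 - (X : K⟦X⟧) ^ (k + 1))⁻¹ ≡ 1 [X^T] := by
  have hunit : constantCoeff (1 - (X : K⟦X⟧) ^ (k + 1)) ≠ 0 := by simp
  refine SModEq.of_mul_right_isUnit (isUnit_iff_constantCoeff.2 (isUnit_iff_ne_zero.2 hunit)) ?_
  rw [PowerSeries.inv_mul_cancel _ hunit, one_mul]
  simpa using (SModEq.refl (1 : K⟦X⟧)).sub (X_pow_mul_smodEq_zero h 1).symm

end Congruence

section RogersRamanujan

variable {T : ℕ}

local notation:50 A " ≡ " B " [X^" T "]" => SModEq (Ideal.span {(X : ℚ⟦X⟧) ^ T}) A B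

lemma eulerProd_smodEq {M : ℕ} (h : T ≤ M) : eulerProd ≡ qPochhammer (X : ℚ⟦X⟧) M [X^T] :=
  smodEq_of_coeff_eq_of_stable (fun _ _ _ => qPochhammer_smodEq dvd_rfl) (fun _ => coeff_mk _ _) h

lemma rrSum_smodEq {M : ℕ} (h : T ≤ M) :
    rrSum ≡ ∑ m ∈ range M, (X : ℚ⟦X⟧) ^ (m ^ 2) * (qPochhammer X m)⁻¹ [X^T] := by
  refine smodEq_of_coeff_eq_of_stable
    (F := fun M => ∑ m ∈ range M, (X : ℚ⟦X⟧) ^ (m ^ 2) * (qPochhammer X m)⁻¹) ?_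
    (fun _ => coeff_mk _ _) h
  intro t a b ha hb
  exact sum_range_smodEq_of_tail
    (fun i hi => X_pow_mul_smodEq_zero (hi.trans (Nat.le_self_pow two_ne_zero i)) _) ha hb

lemma rrProd_smodEq {M : ℕ} (h : T ≤ M) :
    rrProd ≡
      ∏ j ∈ range M, ((1 - (X : ℚ⟦X⟧) ^ (5 * j + 1))⁻¹ * (1 - X ^ (5 * j + 4))⁻¹) [X^T] := by
  refine smodEq_of_coeff_eq_of_stable
    (F := fun M => ∏ j ∈ range M, ((1 - (X : ℚ⟦X⟧) ^ (5 * j + 1))⁻¹ * (1 - X ^ (5 * j + 4))⁻¹))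
    ?_ (fun _ => coeff_mk _ _) h
  intro t a b ha hb
  refine prod_range_smodEq_of_tail (fun i hi => ?_) ha hb
  simpa using (inv_one_sub_X_pow_smodEq_one (K := ℚ) (k := 5 * i) (by omega)).mul
    (inv_one_sub_X_pow_smodEq_one (K := ℚ) (k := 5 * i + 3) (by omega))

lemma rrSum_smodEq_rrSumPoly {n : ℕ} (h : 3 * T ≤ n) : rrSum ≡ rrSumPoly (X : ℚ⟦X⟧) n [X^T] := by
  have hinv : ∀ m < T, (qPochhammer (X : ℚ⟦X⟧) m)⁻¹ ≡ gaussBinom X (n - m) m [X^T] :=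
      fun m hm => by
    have hunit := isUnit_qPochhammer (dvd_refl (X : ℚ⟦X⟧)) m
    refine SModEq.of_mul_right_isUnit hunit ?_
    rw [PowerSeries.inv_mul_cancel _ (isUnit_iff_constantCoeff.1 hunit).ne_zero]
    exact (gaussBinom_mul_qPochhammer_smodEq_one dvd_rfl (by omega) (by omega)).symm
  calc rrSum ≡ ∑ m ∈ range T, (X : ℚ⟦X⟧) ^ (m ^ 2) * (qPochhammer X m)⁻¹ [X^T] :=
        rrSum_smodEq le_rfl
    _ ≡ ∑ m ∈ range T, (X : ℚ⟦X⟧) ^ (m ^ 2) * gaussBinom X (n - m) m [X^T] :=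
        SModEq.sum fun m hm => SModEq.rfl.mul (hinv m (mem_range.1 hm))
    _ ≡ rrSumPoly X n [X^T] :=
        sum_range_smodEq_of_tail (fun i hi =>
          X_pow_mul_smodEq_zero (hi.trans (Nat.le_self_pow two_ne_zero i)) _) le_rfl (by omega)

noncomputable def rrTheta : ℚ⟦X⟧ :=
  PowerSeries.mk fun N =>
    ∑ u ∈ Finset.Icc (-(N : ℤ)) (N : ℤ),
      if u * (5 * u + 1) / 2 = (N : ℤ) then ((-1 : ℚ) ^ u : ℚ) else 0

lemma rrTheta_smodEq {T n : ℕ} (h : T ≤ n + 1) :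
    rrTheta ≡ ∑ j ∈ Icc (-(n : ℤ)) n, (j.negOnePow : ℚ⟦X⟧) * X ^ rrExp j [X^T] := by
  refine smodEq_X_pow_iff.2 fun N hN => ?_
  have hexp : ∀ u : ℤ, u * (5 * u + 1) / 2 = N ↔ N = rrExp u := fun u => by
    have := two_mul_rrExp u
    omega
  have hIcc : Icc (-(N : ℤ)) N ⊆ Icc (-(n : ℤ)) n := Icc_subset_Icc (by omega) (by omega)
  rw [rrTheta, coeff_mk, map_sum, sum_subset hIcc fun u _ hu => ?_]
  · refine sum_congr rfl fun u _ => ?_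
    rw [← map_intCast (C (R := ℚ)), coeff_C_mul_X_pow, Int.cast_negOnePow]
    exact if_congr (hexp u) rfl rfl
  · have := natAbs_le_rrExp u
    rw [mem_Icc] at hu
    rw [if_neg (by rw [hexp]; omega)]

lemma sum_smodEq_rrTheta {T n : ℕ} (h : T ≤ n + 1) {c : ℤ → ℚ⟦X⟧}
    (hc : ∀ j : ℤ, j.natAbs < T → c j ≡ 1 [X^T]) :
    ∑ j ∈ Icc (-(n : ℤ)) n, (j.negOnePow : ℚ⟦X⟧) * X ^ rrExp j * c j ≡ rrTheta [X^T] := by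
  refine (SModEq.sum fun j _ => ?_).trans (rrTheta_smodEq h).symm
  have hj := natAbs_le_rrExp j
  generalize rrExp j = e at hj ⊢
  by_cases he : T ≤ e
  · calc (j.negOnePow : ℚ⟦X⟧) * X ^ e * c j = X ^ e * ((j.negOnePow : ℚ⟦X⟧) * c j) := by ring
      _ ≡ 0 [X^T] := X_pow_mul_smodEq_zero he _
      _ ≡ (j.negOnePow : ℚ⟦X⟧) * X ^ e [X^T] := by
          rw [mul_comm]
          exact (X_pow_mul_smodEq_zero he _).symm
  · simpa using SModEq.rfl.mul (hc j (by omega))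

theorem eulerProd_mul_rrSum : eulerProd * rrSum = rrTheta := by
  refine eq_of_forall_smodEq_X_pow fun T => ?_
  -- For `|j| < T`, both `⌊(8T - 5j)/2⌋` and `8T - ⌊(8T - 5j)/2⌋` are at least `T`.
  calc eulerProd * rrSum ≡ qPochhammer X T * rrSumPoly X (8 * T) [X^T] :=
        (eulerProd_smodEq le_rfl).mul (rrSum_smodEq_rrSumPoly (by omega))
    _ = ∑ j ∈ Icc (-(8 * T : ℕ) : ℤ) (8 * T : ℕ), (j.negOnePow : ℚ⟦X⟧) * X ^ rrExp j *
          (qPochhammer X T * gaussBinomInt X (8 * T) (((8 * T : ℕ) - 5 * j) / 2)) := by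
        rw [rrSumPoly_eq_rrThetaPoly, rrThetaPoly, mul_sum]
        exact sum_congr rfl fun j _ => by rw [rrThetaTerm]; ring
    _ ≡ rrTheta [X^T] := sum_smodEq_rrTheta (by omega) fun j hj =>
        qPochhammer_mul_gaussBinomInt_smodEq_one dvd_rfl le_rfl (by omega) (by omega)

theorem eulerProd_mul_rrProd : eulerProd * rrProd = rrTheta := by
  refine eq_of_forall_smodEq_X_pow fun T => ?_
  calc eulerProd * rrProd ≡ qPochhammer X (5 * (2 * T)) *
        ∏ i ∈ range (2 * T), ((1 - X ^ (5 * i + 1))⁻¹ * (1 - X ^ (5 * i + 4))⁻¹) [X^T] :=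
        (eulerProd_smodEq (by omega)).mul (rrProd_smodEq (by omega))
    _ = ∑ j ∈ Icc (-(2 * T : ℕ) : ℤ) (2 * T : ℕ), (j.negOnePow : ℚ⟦X⟧) * X ^ rrExp j *
          (qPochhammer (X ^ 5) (2 * T) *
            gaussBinomInt (X ^ 5) (2 * (2 * T)) ((2 * T : ℕ) - j)) := by
        rw [qPochhammer_X_five_mul_mul_prod_inv, prod_one_sub_mul_one_sub_eq_sum X X_ne_zero,
          sum_mul]
        exact sum_congr rfl fun j _ => by ring
    _ ≡ rrTheta [X^T] := sum_smodEq_rrTheta (by omega) fun j hj =>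
        qPochhammer_mul_gaussBinomInt_smodEq_one (dvd_pow_self X (by norm_num)) (by omega)
          (by omega) (by omega)

end RogersRamanujan

/-- the Rogers–Ramanujan identity
`Σ_{m=0}^∞ q^{m²}/(q)_m = ∏_{j=0}^∞ 1/((1-q^{5j+1})(1-q^{5j+4}))`, and equivalently (the
`n = k = 1` case of the main identity)
`(1/(q)_∞) Σ_{u∈ℤ} (-1)^u q^{(5/2)u² + u/2} = Σ_{m=0}^∞ q^{m²}/(q)_m`
(note `(5/2)u² + u/2 = u(5u+1)/2 ∈ ℕ`, and this exponent equals `N` only if `|u| ≤ N`). -/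
theorem rogers_ramanujan :
    rrSum = rrProd ∧
    eulerProd⁻¹ *
        PowerSeries.mk (fun N =>
          ∑ u ∈ Finset.Icc (-(N : ℤ)) (N : ℤ),
            if u * (5 * u + 1) / 2 = (N : ℤ) then ((-1 : ℚ) ^ u : ℚ) else 0)
      = rrSum := by
  have hunit : constantCoeff eulerProd ≠ 0 := by
    rw [← coeff_zero_eq_constantCoeff_apply, eulerProd, coeff_mk,
      coeff_zero_eq_constantCoeff_apply]
    exact (isUnit_iff_constantCoeff.1 (isUnit_qPochhammer dvd_rfl 1)).ne_zero
  refine ⟨mul_left_cancel₀ (fun h => hunit (by rw [h, map_zero]))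
    (eulerProd_mul_rrSum.trans eulerProd_mul_rrProd.symm), ?_⟩
  change eulerProd⁻¹ * rrTheta = rrSum
  rw [← eulerProd_mul_rrSum, ← mul_assoc, PowerSeries.inv_mul_cancel _ hunit, one_mul]
end

section
/- For u ∈ Z^n, set ρ_m = m - 1/2, v_m = ρ_m + c·u_m for a fixed constant c = 2(n+k)+1 with n, k positive integers. Then the rational number ξ(u) = Π_{1≤l<m≤n} (v_m² - v_l²)/(ρ_m² - ρ_l²) is always an integer, and ξ(0) = 1. -/
/-!
Since `c` is an integer, `v_m = T_m + 1/2` with `T_m ∈ ℤ`. The numerator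
of `ξ(u)` is the Vandermonde determinant of the `v_m²`, and replacing the monomial columns by the
monic polynomials `P_j(x) = ∏_{t<j} (x - (t + 1/2)²)` does not change it. Since
`(T + 1/2)² - (t + 1/2)² = (T - t)(T + t + 1)`, the entry `P_j(v_m²)` is the falling factorial
of length `2j` at `T_m + j`, i.e. `(2j)! · binom(T_m + j, 2j)`. Hence the numerator is
`∏_j (2j)!` times the integer determinant `det [binom(T_m + j, 2j)]`, and the denominator is the
case `T_m = m - 1`, where that matrix is unitriangular.
-/

open Finset Polynomial Matrix
open scoped Nat

lemma prod_filter_lt_eq_prod_prod_Ioi {α M : Type*} [Fintype α] [LinearOrder α]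
    [LocallyFiniteOrderTop α] [CommMonoid M] (f : α → α → M) :
    ∏ p ∈ univ.filter (fun p : α × α => p.1 < p.2), f p.1 p.2
      = ∏ i, ∏ j ∈ Ioi i, f i j := by
  simp_rw [prod_filter, Fintype.prod_prod_type, ← prod_filter, filter_lt_eq_Ioi]

lemma prod_range_sub_mul_add_eq_descPochhammer_eval {R : Type*} [CommRing R] (x : R) (j : ℕ) :
    ∏ t ∈ range j, ((x - t) * (x + t + 1)) = (descPochhammer R (2 * j)).eval (x + j) := by
  rw [descPochhammer_eval_eq_prod_range, two_mul, prod_range_add, prod_mul_distrib, mul_comm,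
    ← prod_range_reflect]
  congr 1
  · refine prod_congr rfl fun t ht => ?_
    have hj : ((j - 1 - t : ℕ) : R) + t + 1 = j := by
      have := mem_range.mp ht
      rw [← Nat.cast_add, ← Nat.cast_add_one, show j - 1 - t + t + 1 = j by omega]
    linear_combination hj
  · refine prod_congr rfl fun t _ => ?_
    push_cast
    ring

lemma descPochhammer_eval_eq_factorial_mul_choose (t : ℤ) (m : ℕ) :
    (descPochhammer ℤ m).eval t = m ! * Ring.choose t m := by
  rw [eval_eq_smeval, Ring.descPochhammer_eq_factorial_smul_choose, nsmul_eq_mul]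

lemma prod_range_sq_add_half_sub_sq_add_half {K : Type*} [Field K] [NeZero (2 : K)]
    (T : ℤ) (j : ℕ) :
    ∏ t ∈ range j, (((T : K) + 1 / 2) ^ 2 - ((t : K) + 1 / 2) ^ 2)
      = (2 * j)! * ((Ring.choose (T + j) (2 * j) : ℤ) : K) := by
  have hsq : ∀ t : K, ((T : K) + 1 / 2) ^ 2 - (t + 1 / 2) ^ 2 = (T - t) * (T + t + 1) := by
    intro t
    field_simp
    ring
  simp_rw [hsq]
  rw [prod_range_sub_mul_add_eq_descPochhammer_eval, ← Int.cast_natCast (R := K) j,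
    ← Int.cast_add, ← descPochhammer_eval_cast, descPochhammer_eval_eq_factorial_mul_choose]
  push_cast
  rfl

def chooseMatrix {n : ℕ} (T : Fin n → ℤ) : Matrix (Fin n) (Fin n) ℤ :=
  of fun i j => Ring.choose (T i + j) (2 * j)

lemma det_chooseMatrix_val (n : ℕ) : (chooseMatrix fun i : Fin n => (i : ℤ)).det = 1 := by
  have hentry : ∀ i j : Fin n, chooseMatrix (fun i : Fin n => (i : ℤ)) i j
      = Nat.choose (i + j) (2 * j) := fun i j => by
    rw [chooseMatrix, of_apply, ← Ring.choose_natCast]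
    push_cast
    rfl
  rw [det_of_isLowerTriangular]
  · refine prod_eq_one fun i _ => ?_
    rw [hentry, ← two_mul, Nat.choose_self, Nat.cast_one]
  · intro i j hij
    have := Fin.lt_def.mp (OrderDual.toDual_lt_toDual.mp hij)
    rw [hentry, Nat.choose_eq_zero_of_lt (by omega), Nat.cast_zero]

lemma prod_Ioi_sq_add_half_sub_eq_mul_det_chooseMatrix {K : Type*} [Field K] [NeZero (2 : K)]
    {n : ℕ} (T : Fin n → ℤ) :
    ∏ i, ∏ j ∈ Ioi i, (((T j : K) + 1 / 2) ^ 2 - ((T i : K) + 1 / 2) ^ 2)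
      = (∏ j : Fin n, ((2 * j : ℕ)! : K)) * ((chooseMatrix T).det : K) := by
  let P : Fin n → K[X] := fun j => ∏ t ∈ range j, (X - C (((t : K) + 1 / 2) ^ 2))
  have hP : ∀ i j, (P j).eval (((T i : K) + 1 / 2) ^ 2)
      = ((2 * j : ℕ)! : K) * ((chooseMatrix T i j : ℤ) : K) := fun i j => by
    simp only [P, eval_prod, eval_sub, eval_X, eval_C, chooseMatrix, of_apply]
    exact prod_range_sq_add_half_sub_sq_add_half (T i) j
  rw [← det_vandermonde, det_eval_matrixOfPolynomials_eq_det_vandermonde _ P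
    (fun j => by rw [natDegree_finsetProd_X_sub_C_eq_card, card_range])
    (fun j => monic_prod_X_sub_C _ _)]
  simp_rw [hP]
  rw [det_mul_row (fun j => _) (fun i j => ((chooseMatrix T i j : ℤ) : K)), Int.cast_det]
  rfl

theorem ξ_is_integer_general (n k : ℕ)
    (c : ℚ) (hc : c = 2 * (n + k) + 1)
    (ρ : Fin n → ℚ) (hρ : ∀ i, ρ i = ((i : ℕ) + 1 : ℚ) - 1 / 2)
    (v : (Fin n → ℤ) → Fin n → ℚ) (hv : ∀ u i, v u i = ρ i + c * u i)
    (ξ : (Fin n → ℤ) → ℚ)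
    (hξ : ∀ u, ξ u = ∏ p ∈ Finset.univ.filter (fun p : Fin n × Fin n => p.1 < p.2),
      ((v u p.2) ^ 2 - (v u p.1) ^ 2) / ((ρ p.2) ^ 2 - (ρ p.1) ^ 2)) :
    (∀ u : Fin n → ℤ, ∃ z : ℤ, ξ u = (z : ℚ)) ∧ ξ 0 = 1 := by
  let T : (Fin n → ℤ) → Fin n → ℤ := fun u i => i + (2 * (n + k) + 1) * u i
  have hvT : ∀ u i, v u i = (T u i : ℚ) + 1 / 2 := fun u i => by
    simp only [hv, hρ, hc, T]
    push_cast
    ring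
  have hρT : ∀ i, ρ i = (T 0 i : ℚ) + 1 / 2 := fun i => by
    simp only [hρ, T, Pi.zero_apply, mul_zero, add_zero]
    push_cast
    ring
  have hdet0 : (chooseMatrix (T 0)).det = 1 := by
    simpa [T] using det_chooseMatrix_val n
  have hξT : ∀ u, ξ u = (chooseMatrix (T u)).det := fun u => by
    have hfact : (∏ j : Fin n, ((2 * j : ℕ)! : ℚ)) ≠ 0 :=
      prod_ne_zero_iff.mpr fun j _ => Nat.cast_ne_zero.mpr (Nat.factorial_ne_zero _)
    rw [hξ, prod_div_distrib, prod_filter_lt_eq_prod_prod_Ioi (fun i j => v u j ^ 2 - v u i ^ 2),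
      prod_filter_lt_eq_prod_prod_Ioi (fun i j => ρ j ^ 2 - ρ i ^ 2)]
    simp_rw [hvT, hρT]
    rw [prod_Ioi_sq_add_half_sub_eq_mul_det_chooseMatrix,
      prod_Ioi_sq_add_half_sub_eq_mul_det_chooseMatrix, hdet0, Int.cast_one, mul_one,
      mul_div_cancel_left₀ _ hfact]
  refine ⟨fun u => ⟨_, hξT u⟩, ?_⟩
  rw [hξT, hdet0, Int.cast_one]

/-- for `u ∈ ℤⁿ`, with `ρ_m = m - 1/2` and `v_m = ρ_m + c·u_m`, where
`c = 2(n+k)+1` for positive integers `n, k`, the rational number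
`ξ(u) = ∏_{1 ≤ l < m ≤ n} (v_m² - v_l²)/(ρ_m² - ρ_l²)` is an integer, and `ξ(0) = 1`.
(The index `i : Fin n` corresponds to `m = i + 1`.) -/
theorem ξ_is_integer (n k : ℕ) (hn : 0 < n) (hk : 0 < k)
    (c : ℚ) (hc : c = 2 * (n + k) + 1)
    (ρ : Fin n → ℚ) (hρ : ∀ i, ρ i = ((i : ℕ) + 1 : ℚ) - 1 / 2)
    (v : (Fin n → ℤ) → Fin n → ℚ) (hv : ∀ u i, v u i = ρ i + c * u i)
    (ξ : (Fin n → ℤ) → ℚ)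
    (hξ : ∀ u, ξ u = ∏ p ∈ Finset.univ.filter (fun p : Fin n × Fin n => p.1 < p.2),
      ((v u p.2) ^ 2 - (v u p.1) ^ 2) / ((ρ p.2) ^ 2 - (ρ p.1) ^ 2)) :
    (∀ u : Fin n → ℤ, ∃ z : ℤ, ξ u = (z : ℚ)) ∧ ξ 0 = 1 :=
  ξ_is_integer_general n k c hc ρ hρ v hv ξ hξ
end

section
/- Let W be the group of signed permutations of {1,...,n} acting on R^n, and let sgn₀(w) denote the sign of the underlying (unsigned) permutation of w. For ρ = (1/2, 3/2, ..., (2n-1)/2) ∈ R^n and any μ ∈ R^n with distinct values μ_1² < μ_2² < ... among the squares, one has: lim_{t→0} [Σ_{w∈W} sgn₀(w) e^{t⟨w(μ), ρ⟩}] / [Σ_{w∈W} sgn₀(w) e^{t⟨w(ρ), ρ⟩}] = Π_{1≤l<m≤n} (μ_m² - μ_l²)/(ρ_m² - ρ_l²), where ⟨·,·⟩ is the standard inner product. -/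
open Filter

/-- The alternating Weyl sum `Σ_{w ∈ W} sgn₀(w) e^{t⟨w(μ), ρW⟩}` over the group `W` of
signed permutations of `{1,…,n}`, where `sgn₀(w)` is the sign of the underlying (unsigned)
permutation; parametrizing `w` by a pair `(σ, ε)` of a permutation and a sign flip, the
pairing is `⟨w(μ), ρW⟩ = Σ_j ε_j μ_j ρW_{σ(j)}`. -/
noncomputable def signedWeylSum (n : ℕ) (ρW : Fin n → ℝ) (μ : Fin n → ℝ) (t : ℝ) : ℝ :=
  ∑ σ : Equiv.Perm (Fin n), ∑ ε : Fin n → Bool,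
    ((Equiv.Perm.sign σ : ℤ) : ℝ) *
      Real.exp (t * ∑ j, (if ε j then -1 else 1) * μ j * ρW (σ j))

/-!
Summing over the sign flips first turns `signedWeylSum n ρ μ t` into `2ⁿ det (cosh (t ρᵢ μⱼ))ᵢⱼ`.
Cutting the series of `cosh` after `n` terms writes this matrix as `V(ρ²) Λ(t) V(μ²)ᵀ + E(t)`, where
`V` is the Vandermonde matrix, `Λ(t) = diag (t^{2k} / (2k)!)_{k < n}` and `E(t) = O(t^{2n})`
entrywise. When `V(ρ²)` is invertible this gives
`det = det V(ρ²) · det Λ(t) · det (V(μ²)ᵀ + (V(ρ²) Λ(t))⁻¹ E(t))`, and the last matrix tends to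
`V(μ²)ᵀ` because `Λ(t)⁻¹` grows at most like `t^{-2(n-1)}`. The factor `det V(ρ²) · det Λ(t)` is
common to numerator and denominator, so the ratio tends to `det V(μ²) / det V(ρ²)`.
-/

open Topology Asymptotics Matrix Finset
open scoped Nat

noncomputable def coshTaylorRemainder (n : ℕ) (x : ℝ) : ℝ :=
  Real.cosh x - ∑ k ∈ range n, x ^ (2 * k) / (2 * k)!

lemma hasSum_coshTaylorRemainder (n : ℕ) (x : ℝ) :
    HasSum (fun i => x ^ (2 * (i + n)) / (2 * (i + n))!) (coshTaylorRemainder n x) :=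
  (hasSum_nat_add_iff' n).2 (Real.hasSum_cosh x)

lemma abs_coshTaylorRemainder_le (n : ℕ) (x : ℝ) :
    |coshTaylorRemainder n x| ≤ x ^ (2 * n) * Real.cosh x := by
  have hle : ∀ i, x ^ (2 * (i + n)) / (2 * (i + n))! ≤ x ^ (2 * n) * (x ^ (2 * i) / (2 * i)!) :=
    fun i => by
      rw [mul_div_assoc', ← pow_add, show 2 * n + 2 * i = 2 * (i + n) by ring]
      exact div_le_div_of_nonneg_left (by rw [pow_mul]; positivity) (by positivity)
        (Nat.cast_le.2 (Nat.factorial_le (by omega)))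
  rw [abs_of_nonneg ((hasSum_coshTaylorRemainder n x).nonneg fun i => by rw [pow_mul]; positivity)]
  exact hasSum_le hle (hasSum_coshTaylorRemainder n x) ((Real.hasSum_cosh x).mul_left _)

lemma coshTaylorRemainder_isBigO (n : ℕ) :
    coshTaylorRemainder n =O[𝓝 0] fun x => x ^ (2 * n) := by
  refine IsBigO.of_bound (Real.cosh 1) ?_
  filter_upwards [Metric.closedBall_mem_nhds (0 : ℝ) one_pos] with x hx
  have hpow : 0 ≤ x ^ (2 * n) := by rw [pow_mul]; positivity
  have hcosh : Real.cosh x ≤ Real.cosh 1 := Real.cosh_le_cosh.2 (by simpa using hx)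
  rw [Real.norm_eq_abs, Real.norm_eq_abs, abs_of_nonneg hpow]
  calc |coshTaylorRemainder n x| ≤ x ^ (2 * n) * Real.cosh x := abs_coshTaylorRemainder_le n x
    _ ≤ Real.cosh 1 * x ^ (2 * n) := by rw [mul_comm]; gcongr

lemma tendsto_coshTaylorRemainder_mul_div {k n : ℕ} (hkn : k < n) (c : ℝ) :
    Tendsto (fun t => coshTaylorRemainder n (t * c) / t ^ (2 * k)) (𝓝 0) (𝓝 0) := by
  have hc : Tendsto (fun t : ℝ => t * c) (𝓝 0) (𝓝 0) := by
    simpa using (continuous_mul_const c).tendsto (0 : ℝ)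
  have hO : (fun t => coshTaylorRemainder n (t * c)) =O[𝓝 0] fun t => t ^ (2 * n) :=
    ((coshTaylorRemainder_isBigO n).comp_tendsto hc).trans <|
      (isBigO_refl (fun t : ℝ => t ^ (2 * n)) _).const_mul_left (c ^ (2 * n)) |>.congr_left
        fun t => by simp [mul_pow, mul_comm]
  exact (hO.trans_isLittleO (isLittleO_pow_pow (by omega))).tendsto_div_nhds_zero

lemma sum_bool_exp_eq_prod_two_mul_cosh {ι : Type*} [Fintype ι] [DecidableEq ι] (a : ι → ℝ) :
    ∑ ε : ι → Bool, Real.exp (∑ j, (if ε j then -1 else 1) * a j) = ∏ j, 2 * Real.cosh (a j) := by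
  simp_rw [Real.exp_sum]
  rw [← Fintype.prod_sum (fun j (b : Bool) => Real.exp ((if b then -1 else 1) * a j))]
  refine Finset.prod_congr rfl fun j _ => ?_
  simp [Real.cosh_eq]
  ring

lemma det_vandermonde_div_det_vandermonde {K : Type*} [Field K] {n : ℕ} (v w : Fin n → K) :
    (vandermonde v).det / (vandermonde w).det =
      ∏ p ∈ univ.filter (fun p : Fin n × Fin n => p.1 < p.2),
        (v p.2 - v p.1) / (w p.2 - w p.1) := by
  rw [det_vandermonde, det_vandermonde, ← Finset.prod_div_distrib, Finset.prod_filter,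
    Fintype.prod_prod_type]
  refine Finset.prod_congr rfl fun i _ => ?_
  rw [← Finset.prod_div_distrib, ← Finset.prod_filter, Finset.filter_lt_eq_Ioi]

section CoshMatrix

variable {n : ℕ}

noncomputable def coshMatrix (ρ μ : Fin n → ℝ) (t : ℝ) : Matrix (Fin n) (Fin n) ℝ :=
  of fun i j => Real.cosh (t * (ρ i * μ j))

lemma signedWeylSum_eq_two_pow_mul_det (ρ μ : Fin n → ℝ) (t : ℝ) :
    signedWeylSum n ρ μ t = 2 ^ n * (coshMatrix ρ μ t).det := by
  rw [signedWeylSum, det_apply', Finset.mul_sum]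
  refine Finset.sum_congr rfl fun σ _ => ?_
  have hpair : ∀ ε : Fin n → Bool, t * ∑ j, (if ε j then -1 else 1) * μ j * ρ (σ j)
      = ∑ j, (if ε j then -1 else 1) * (t * (ρ (σ j) * μ j)) := fun ε => by
    rw [Finset.mul_sum]; exact Finset.sum_congr rfl fun j _ => by ring
  simp_rw [← Finset.mul_sum, hpair, sum_bool_exp_eq_prod_two_mul_cosh, Finset.prod_mul_distrib,
    Finset.prod_const, Finset.card_univ, Fintype.card_fin, coshMatrix, of_apply]
  ring

noncomputable def coshTaylorDiagonal (n : ℕ) (t : ℝ) : Matrix (Fin n) (Fin n) ℝ :=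
  diagonal fun k => t ^ (2 * (k : ℕ)) / (2 * (k : ℕ))!

lemma det_coshTaylorDiagonal_ne_zero {t : ℝ} (ht : t ≠ 0) : (coshTaylorDiagonal n t).det ≠ 0 := by
  rw [coshTaylorDiagonal, det_diagonal]
  exact Finset.prod_ne_zero_iff.2 fun k _ => div_ne_zero (pow_ne_zero _ ht) (by positivity)

lemma coshTaylorDiagonal_inv {t : ℝ} (ht : t ≠ 0) :
    (coshTaylorDiagonal n t)⁻¹ = diagonal fun k : Fin n => (2 * (k : ℕ))! / t ^ (2 * (k : ℕ)) := by
  refine inv_eq_right_inv ?_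
  rw [coshTaylorDiagonal, diagonal_mul_diagonal, ← diagonal_one]
  congr 1; funext k
  have : ((2 * (k : ℕ))! : ℝ) ≠ 0 := by positivity
  field_simp

noncomputable def coshRemainderMatrix (ρ μ : Fin n → ℝ) (t : ℝ) : Matrix (Fin n) (Fin n) ℝ :=
  of fun i j => coshTaylorRemainder n (t * (ρ i * μ j))

lemma coshMatrix_eq_vandermonde_mul_add (ρ μ : Fin n → ℝ) (t : ℝ) :
    coshMatrix ρ μ t = vandermonde (fun i => ρ i ^ 2) * coshTaylorDiagonal n t *
      (vandermonde fun j => μ j ^ 2)ᵀ + coshRemainderMatrix ρ μ t := by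
  ext i j
  rw [Matrix.add_apply, mul_apply]
  simp only [coshMatrix, coshRemainderMatrix, coshTaylorDiagonal, coshTaylorRemainder,
    mul_diagonal, of_apply, transpose_apply, vandermonde_apply]
  rw [← Fin.sum_univ_eq_sum_range (fun k => (t * (ρ i * μ j)) ^ (2 * k) / (2 * k)!) n]
  simp only [← pow_mul, mul_pow]
  ring_nf

noncomputable def scaledCoshRemainder (ρ μ : Fin n → ℝ) (t : ℝ) : Matrix (Fin n) (Fin n) ℝ :=
  (vandermonde (fun i => ρ i ^ 2) * coshTaylorDiagonal n t)⁻¹ * coshRemainderMatrix ρ μ t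

lemma tendsto_scaledCoshRemainder (ρ μ : Fin n → ℝ) :
    Tendsto (scaledCoshRemainder ρ μ) (𝓝[≠] 0) (𝓝 0) := by
  refine tendsto_pi_nhds.2 fun k => tendsto_pi_nhds.2 fun j => ?_
  have hterm : ∀ a, Tendsto (fun t => ((2 * (k : ℕ))! * (vandermonde fun i => ρ i ^ 2)⁻¹ k a) *
      (coshTaylorRemainder n (t * (ρ a * μ j)) / t ^ (2 * (k : ℕ)))) (𝓝[≠] 0) (𝓝 0) := fun a => by
    simpa using ((tendsto_coshTaylorRemainder_mul_div k.isLt (ρ a * μ j)).const_mul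
      ((2 * (k : ℕ))! * (vandermonde fun i => ρ i ^ 2)⁻¹ k a)).mono_left nhdsWithin_le_nhds
  have hsum := tendsto_finsetSum univ fun a _ => hterm a
  rw [Finset.sum_const_zero] at hsum
  refine hsum.congr' ?_
  filter_upwards [self_mem_nhdsWithin] with t ht
  rw [scaledCoshRemainder, Matrix.mul_inv_rev, coshTaylorDiagonal_inv ht, mul_apply]
  simp only [diagonal_mul, coshRemainderMatrix, of_apply]
  exact Finset.sum_congr rfl fun a _ => by ring

lemma det_coshMatrix_eq {ρ : Fin n → ℝ} (hρ : (vandermonde fun i => ρ i ^ 2).det ≠ 0)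
    (μ : Fin n → ℝ) {t : ℝ} (ht : t ≠ 0) :
    (coshMatrix ρ μ t).det = (vandermonde fun i => ρ i ^ 2).det * (coshTaylorDiagonal n t).det *
      ((vandermonde fun j => μ j ^ 2)ᵀ + scaledCoshRemainder ρ μ t).det := by
  have hdet : (vandermonde (fun i => ρ i ^ 2) * coshTaylorDiagonal n t).det ≠ 0 := by
    rw [det_mul]; exact mul_ne_zero hρ (det_coshTaylorDiagonal_ne_zero ht)
  have hVΛ := mul_nonsing_inv _ (isUnit_iff_ne_zero.2 hdet)
  rw [← det_mul, ← det_mul, mul_add, scaledCoshRemainder, ← mul_assoc, hVΛ, one_mul,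
    coshMatrix_eq_vandermonde_mul_add]

lemma tendsto_det_coshMatrix_div {ρ : Fin n → ℝ} (hρ : (vandermonde fun i => ρ i ^ 2).det ≠ 0)
    (μ : Fin n → ℝ) :
    Tendsto (fun t => (coshMatrix ρ μ t).det / (coshMatrix ρ ρ t).det) (𝓝[≠] 0)
      (𝓝 ((vandermonde fun i => μ i ^ 2).det / (vandermonde fun i => ρ i ^ 2).det)) := by
  have hlim : ∀ ν : Fin n → ℝ, Tendsto
      (fun t => ((vandermonde fun j => ν j ^ 2)ᵀ + scaledCoshRemainder ρ ν t).det) (𝓝[≠] 0)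
      (𝓝 (vandermonde fun i => ν i ^ 2).det) := fun ν => by
    have h := (tendsto_const_nhds (x := (vandermonde fun j => ν j ^ 2)ᵀ)).add
      (tendsto_scaledCoshRemainder ρ ν)
    rw [add_zero] at h
    simpa only [det_transpose, Function.comp_def, id] using
      (continuous_id.matrix_det.tendsto _).comp h
  refine ((hlim μ).div (hlim ρ) hρ).congr' ?_
  filter_upwards [self_mem_nhdsWithin] with t ht
  rw [Pi.div_apply, det_coshMatrix_eq hρ μ ht, det_coshMatrix_eq hρ ρ ht,
    mul_div_mul_left _ _ (mul_ne_zero hρ (det_coshTaylorDiagonal_ne_zero ht))]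

end CoshMatrix

theorem signed_weyl_sum_ratio_limit_general (n : ℕ)
    (ρW : Fin n → ℝ) (hρ : ∀ m, ρW m = (m : ℕ) + 1 / 2)
    (μ : Fin n → ℝ) :
    Tendsto (fun t : ℝ => signedWeylSum n ρW μ t / signedWeylSum n ρW ρW t)
      (nhdsWithin 0 {t : ℝ | t ≠ 0})
      (nhds (∏ p ∈ Finset.univ.filter (fun p : Fin n × Fin n => p.1 < p.2),
        ((μ p.2) ^ 2 - (μ p.1) ^ 2) / ((ρW p.2) ^ 2 - (ρW p.1) ^ 2))) := by
  have hρ_pos : ∀ m, 0 < ρW m := fun m => by rw [hρ]; positivity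
  have hρ_sq : Function.Injective fun i => ρW i ^ 2 := fun i j hij => by
    have hij' := (sq_eq_sq₀ (hρ_pos i).le (hρ_pos j).le).1 hij
    rw [hρ, hρ, add_left_inj, Nat.cast_inj] at hij'
    exact Fin.ext hij'
  have hlim := tendsto_det_coshMatrix_div (det_vandermonde_ne_zero_iff.2 hρ_sq) μ
  rw [det_vandermonde_div_det_vandermonde] at hlim
  refine hlim.congr fun t => ?_
  rw [signedWeylSum_eq_two_pow_mul_det, signedWeylSum_eq_two_pow_mul_det,
    mul_div_mul_left _ _ (by positivity)]

/-- for `ρ = (1/2, 3/2, …, (2n-1)/2)` and any `μ ∈ ℝⁿ` with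
`μ₁² < μ₂² < ⋯ < μₙ²`, the ratio of alternating signed-Weyl sums satisfies
`lim_{t→0} [Σ_w sgn₀(w) e^{t⟨w(μ),ρ⟩}] / [Σ_w sgn₀(w) e^{t⟨w(ρ),ρ⟩}]
  = ∏_{1≤l<m≤n} (μ_m² - μ_l²)/(ρ_m² - ρ_l²)`. -/
theorem signed_weyl_sum_ratio_limit (n : ℕ) (hn : 0 < n)
    (ρW : Fin n → ℝ) (hρ : ∀ m, ρW m = (m : ℕ) + 1 / 2)
    (μ : Fin n → ℝ) (hμ : ∀ l m : Fin n, l < m → (μ l) ^ 2 < (μ m) ^ 2) :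
    Tendsto (fun t : ℝ => signedWeylSum n ρW μ t / signedWeylSum n ρW ρW t)
      (nhdsWithin 0 {t : ℝ | t ≠ 0})
      (nhds (∏ p ∈ Finset.univ.filter (fun p : Fin n × Fin n => p.1 < p.2),
        ((μ p.2) ^ 2 - (μ p.1) ^ 2) / ((ρW p.2) ^ 2 - (ρW p.1) ^ 2))) :=
  signed_weyl_sum_ratio_limit_general n ρW hρ μ
end
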